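/- Let A₁,...,Aₙ ∈ M(2n,ℂ) be block-diagonal matrices, where each A_i consists of an upper-left (2n−2)×(2n−2) block B_i and a lower-right 2×2 block C_i (all off-block entries zero). Then Q(A₁,...,Aₙ) = ∑_{i=1}^{n} Q(B₁,...,B̂_i,...,Bₙ) · Q(C_i), where B̂_i denotes omission of B_i. -/

import Mathlib

/-!
Write `Q` as a signed sum over permutations `σ` of the `2n` indices of products of entries of
`Aᵢ - Aᵢᵀ`, one per pair `(2i, 2i+1)`. For block-diagonal `Aᵢ` the factor of pair `i` vanishes
unless `σ` sends the pair into a single block. The lower block has two indices, so exactly one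
pair `i` lands there, and the surviving `σ` are the permutations `τ ⊕ c` of the two blocks,
precomposed with the relabelling of pairs that moves pair `i` to the end. That relabelling moves
whole pairs, hence is even, and the sum splits as `∑ᵢ Q(B₁,…,B̂ᵢ,…,Bₙ) · Q(Cᵢ)`.
-/

open Matrix

/-- The function `Q` on `n` matrices of size `2n × 2n`. -/
noncomputable def Qgen (n : ℕ) (A : Fin n → Matrix (Fin (2*n)) (Fin (2*n)) ℂ) : ℂ :=
  ∑ σ : Equiv.Perm (Fin (2*n)),
    ((Equiv.Perm.sign σ : ℤ) : ℂ) *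
      ∏ i : Fin n,
        (A i (σ ⟨2*(i:ℕ), by have := i.isLt; omega⟩) (σ ⟨2*(i:ℕ)+1, by have := i.isLt; omega⟩)
          - A i (σ ⟨2*(i:ℕ)+1, by have := i.isLt; omega⟩) (σ ⟨2*(i:ℕ), by have := i.isLt; omega⟩))

open Equiv

/-- The two entries of a pair landing in `Fin 2` fill it, so only the pair of `f.symm (inr 0)`
can land there. -/
theorem Equiv.exists_forall_ne_isLeft {ι α : Type*} (f : ι × Fin 2 ≃ α ⊕ Fin 2)
    (hf : ∀ i, (f (i, 0)).isLeft = (f (i, 1)).isLeft) :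
    ∃ i₀, ∀ i, i ≠ i₀ → ∀ k, (f (i, k)).isLeft := by
  refine ⟨(f.symm (.inr 0)).1, fun i hi k => ?_⟩
  by_contra hk
  have hright : ∀ k', ∃ b, f (i, k') = .inr b := fun k' => by
    have : (f (i, k')).isLeft = false := by
      fin_cases k <;> fin_cases k' <;> simp_all
    exact Sum.isRight_iff.mp (by simpa using this)
  choose g hg using hright
  have hg_inj : Function.Injective g := fun k₁ k₂ h => by
    simpa using f.injective ((hg k₁).trans ((congrArg Sum.inr h).trans (hg k₂).symm))
  obtain ⟨k', hk'⟩ := (Finite.injective_iff_surjective.mp hg_inj) 0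
  apply hi
  rw [← hk', ← hg, Equiv.symm_apply_apply]

theorem Matrix.reindex_fromBlocks_sub_transpose {l o n α : Type*} [AddGroup α] (e : l ⊕ o ≃ n)
    (P : Matrix l l α) (T : Matrix o o α) :
    reindex e e (fromBlocks P 0 0 T) - (reindex e e (fromBlocks P 0 0 T))ᵀ =
      reindex e e (fromBlocks (P - Pᵀ) 0 0 (T - Tᵀ)) := by
  ext x y
  rcases hx : e.symm x with a | a <;> rcases hy : e.symm y with b | b <;>
    simp [hx, hy]

namespace Qgen

variable {m : ℕ}

def pairEquiv (m : ℕ) : Fin m × Fin 2 ≃ Fin (2 * m) :=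
  finProdFinEquiv.trans (finCongr (Nat.mul_comm m 2))

@[simp]
lemma val_pairEquiv (j : Fin m) (k : Fin 2) : (pairEquiv m (j, k) : ℕ) = 2 * j + k := by
  simp [pairEquiv, finProdFinEquiv]
  omega

def blockEquiv (m : ℕ) : Fin (2 * m) ⊕ Fin 2 ≃ Fin (2 * (m + 1)) :=
  finSumFinEquiv.trans (finCongr (by omega))

lemma blockEquiv_inl_pairEquiv (j : Fin m) (k : Fin 2) :
    blockEquiv m (.inl (pairEquiv m (j, k))) = pairEquiv (m + 1) (j.castSucc, k) := by
  ext
  simp only [blockEquiv, trans_apply, finCongr_apply, Fin.val_cast, finSumFinEquiv_apply_left]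
  simp

lemma blockEquiv_inr (k : Fin 2) : blockEquiv m (.inr k) = pairEquiv (m + 1) (Fin.last m, k) := by
  ext
  simp only [blockEquiv, trans_apply, finCongr_apply, Fin.val_cast, finSumFinEquiv_apply_right]
  simp

def moveToLast (i : Fin (m + 1)) : Perm (Fin (m + 1)) :=
  (finSuccEquiv' i).trans finSuccEquivLast.symm

@[simp] lemma moveToLast_self (i : Fin (m + 1)) : moveToLast i i = Fin.last m := by
  simp [moveToLast]

@[simp] lemma moveToLast_succAbove (i : Fin (m + 1)) (j : Fin m) :
    moveToLast i (i.succAbove j) = j.castSucc := by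
  simp [moveToLast]

def pairPerm (i : Fin (m + 1)) : Perm (Fin (2 * (m + 1))) :=
  (pairEquiv (m + 1)).permCongr (prodCongrLeft fun _ => moveToLast i)

lemma pairPerm_apply (i j : Fin (m + 1)) (k : Fin 2) :
    pairPerm i (pairEquiv (m + 1) (j, k)) = pairEquiv (m + 1) (moveToLast i j, k) := by
  simp [pairPerm, permCongr_apply]

lemma sign_pairPerm (i : Fin (m + 1)) : Perm.sign (pairPerm i) = 1 := by
  rw [pairPerm, Perm.sign_permCongr, Perm.sign_prodCongrLeft, Fin.prod_univ_two]
  exact Int.units_mul_self _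

def insertPerm (i : Fin (m + 1)) (τ : Perm (Fin (2 * m))) (c : Perm (Fin 2)) :
    Perm (Fin (2 * (m + 1))) :=
  (blockEquiv m).permCongr (sumCongr τ c) * pairPerm i

lemma sign_insertPerm (i : Fin (m + 1)) (τ : Perm (Fin (2 * m))) (c : Perm (Fin 2)) :
    Perm.sign (insertPerm i τ c) = Perm.sign τ * Perm.sign c := by
  rw [insertPerm, map_mul, sign_pairPerm, Perm.sign_permCongr, Perm.sign_sumCongr, mul_one]

lemma insertPerm_apply_self (i : Fin (m + 1)) (τ : Perm (Fin (2 * m))) (c : Perm (Fin 2))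
    (k : Fin 2) : insertPerm i τ c (pairEquiv (m + 1) (i, k)) = blockEquiv m (.inr (c k)) := by
  simp [insertPerm, pairPerm_apply, ← blockEquiv_inr, permCongr_apply]

lemma insertPerm_apply_succAbove (i : Fin (m + 1)) (τ : Perm (Fin (2 * m))) (c : Perm (Fin 2))
    (j : Fin m) (k : Fin 2) :
    insertPerm i τ c (pairEquiv (m + 1) (i.succAbove j, k)) =
      blockEquiv m (.inl (τ (pairEquiv m (j, k)))) := by
  simp [insertPerm, pairPerm_apply, ← blockEquiv_inl_pairEquiv, permCongr_apply]

lemma insertPerm_injective :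
    Function.Injective fun p : Fin (m + 1) × Perm (Fin (2 * m)) × Perm (Fin 2) =>
      insertPerm p.1 p.2.1 p.2.2 := by
  rintro ⟨i, τ, c⟩ ⟨i', τ', c'⟩ h
  dsimp only at h
  obtain rfl : i = i' := by
    by_contra hne
    obtain ⟨j, rfl⟩ := Fin.exists_succAbove_eq hne
    have := congrArg (· (pairEquiv (m + 1) (i'.succAbove j, 0))) h
    simp [insertPerm_apply_self, insertPerm_apply_succAbove] at this
  have h' : Perm.sumCongrHom _ _ (τ, c) = Perm.sumCongrHom _ _ (τ', c') :=
    (blockEquiv m).permCongr.injective (mul_right_cancel h)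
  rw [Perm.sumCongrHom_injective h']

lemma mem_range_insertPerm (i : Fin (m + 1)) (σ : Perm (Fin (2 * (m + 1))))
    (hσ : ∀ j, j ≠ i → ∀ k, ((blockEquiv m).symm (σ (pairEquiv (m + 1) (j, k)))).isLeft) :
    ∃ τ c, insertPerm i τ c = σ := by
  set q : Perm (Fin (2 * m) ⊕ Fin 2) := (blockEquiv m).symm.permCongr (σ * (pairPerm i)⁻¹)
  have hq : Set.MapsTo q (Set.range Sum.inl) (Set.range Sum.inl) := by
    rintro _ ⟨a, rfl⟩
    obtain ⟨⟨j, k⟩, rfl⟩ := (pairEquiv m).surjective a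
    have hpre : (pairPerm i)⁻¹ (pairEquiv (m + 1) (j.castSucc, k)) =
        pairEquiv (m + 1) (i.succAbove j, k) := by
      rw [Perm.inv_eq_iff_eq, pairPerm_apply, moveToLast_succAbove]
    have := hσ (i.succAbove j) (Fin.succAbove_ne i j) k
    simp only [q, permCongr_apply, symm_symm, Perm.mul_apply, blockEquiv_inl_pairEquiv, hpre]
    exact Sum.isLeft_iff.mp this |>.imp fun _ h => h.symm
  obtain ⟨⟨τ, c⟩, hτc⟩ := Perm.mem_sumCongrHom_range_of_perm_mapsTo_inl hq
  refine ⟨τ, c, ?_⟩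
  rw [insertPerm, show sumCongr τ c = q from hτc]
  ext x
  simp [q, permCongr_apply]

section pairTerm

variable {R : Type*} [CommRing R]

def pairTerm (S : Fin m → Matrix (Fin (2 * m)) (Fin (2 * m)) R) (σ : Perm (Fin (2 * m))) : R :=
  ((Perm.sign σ : ℤ) : R) * ∏ j, S j (σ (pairEquiv m (j, 0))) (σ (pairEquiv m (j, 1)))

variable {P : Fin (m + 1) → Matrix (Fin (2 * m)) (Fin (2 * m)) R}
  {T : Fin (m + 1) → Matrix (Fin 2) (Fin 2) R}

local notation "S" => fun i => reindex (blockEquiv m) (blockEquiv m) (fromBlocks (P i) 0 0 (T i))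

lemma isLeft_eq_of_pairTerm_ne_zero (σ : Perm (Fin (2 * (m + 1)))) (hσ : pairTerm S σ ≠ 0)
    (i : Fin (m + 1)) :
    ((blockEquiv m).symm (σ (pairEquiv (m + 1) (i, 0)))).isLeft =
      ((blockEquiv m).symm (σ (pairEquiv (m + 1) (i, 1)))).isLeft := by
  have hentry : S i (σ (pairEquiv (m + 1) (i, 0))) (σ (pairEquiv (m + 1) (i, 1))) ≠ 0 :=
    fun h => hσ (by rw [pairTerm, Finset.prod_eq_zero (Finset.mem_univ i) h, mul_zero])
  contrapose! hentry
  rw [reindex_apply, submatrix_apply]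
  generalize (blockEquiv m).symm (σ (pairEquiv (m + 1) (i, 0))) = x at hentry ⊢
  generalize (blockEquiv m).symm (σ (pairEquiv (m + 1) (i, 1))) = y at hentry ⊢
  rcases x with a | a <;> rcases y with b | b <;> simp_all

lemma pairTerm_insertPerm (i : Fin (m + 1)) (τ : Perm (Fin (2 * m))) (c : Perm (Fin 2)) :
    pairTerm S (insertPerm i τ c) =
      pairTerm (fun j => P (i.succAbove j)) τ * (((Perm.sign c : ℤ) : R) * T i (c 0) (c 1)) := by
  simp only [pairTerm, sign_insertPerm, Fin.prod_univ_succAbove _ i, insertPerm_apply_self,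
    insertPerm_apply_succAbove, reindex_apply, submatrix_apply, symm_apply_apply,
    fromBlocks_apply₁₁, fromBlocks_apply₂₂]
  push_cast
  ring

theorem sum_pairTerm_reindex_fromBlocks :
    ∑ σ, pairTerm S σ = ∑ i, (∑ τ, pairTerm (fun j => P (i.succAbove j)) τ) *
      ∑ c : Perm (Fin 2), ((Perm.sign c : ℤ) : R) * T i (c 0) (c 1) := by
  simp only [Finset.sum_mul_sum, ← pairTerm_insertPerm, ← Fintype.sum_prod_type']
  refine (Fintype.sum_of_injective _ insertPerm_injective _ _ ?_ fun _ => rfl).symm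
  intro σ hσ
  by_contra hne
  obtain ⟨i, hi⟩ := Equiv.exists_forall_ne_isLeft
    (((pairEquiv (m + 1)).trans σ).trans (blockEquiv m).symm)
    (isLeft_eq_of_pairTerm_ne_zero σ hne)
  obtain ⟨τ, c, rfl⟩ := mem_range_insertPerm i σ hi
  exact hσ ⟨(i, τ, c), rfl⟩

end pairTerm

lemma eq_sum_pairTerm (A : Fin m → Matrix (Fin (2 * m)) (Fin (2 * m)) ℂ) :
    Qgen m A = ∑ σ, pairTerm (fun j => A j - (A j)ᵀ) σ := by
  have hpos₀ : ∀ (j : Fin m) (h : 2 * (j : ℕ) < 2 * m),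
      (⟨2 * j, h⟩ : Fin (2 * m)) = pairEquiv m (j, 0) := fun j _ => by ext; simp
  have hpos₁ : ∀ (j : Fin m) (h : 2 * (j : ℕ) + 1 < 2 * m),
      (⟨2 * j + 1, h⟩ : Fin (2 * m)) = pairEquiv m (j, 1) := fun j _ => by ext; simp
  simp only [Qgen, pairTerm, Matrix.sub_apply, transpose_apply, hpos₀, hpos₁]

lemma one_eq_sum (C : Matrix (Fin 2) (Fin 2) ℂ) :
    Qgen 1 (fun _ => C) = ∑ c : Perm (Fin 2), ((Perm.sign c : ℤ) : ℂ) * (C - Cᵀ) (c 0) (c 1) := by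
  have hpair : ∀ k, pairEquiv 1 (0, k) = k := fun k => by ext; rw [val_pairEquiv]; simp
  simp [eq_sum_pairTerm, pairTerm, hpair]

theorem succ_eq_sum_of_fromBlocks (B : Fin (m + 1) → Matrix (Fin (2 * m)) (Fin (2 * m)) ℂ)
    (C : Fin (m + 1) → Matrix (Fin 2) (Fin 2) ℂ)
    (A : Fin (m + 1) → Matrix (Fin (2 * (m + 1))) (Fin (2 * (m + 1))) ℂ)
    (hA : ∀ i, A i = reindex (blockEquiv m) (blockEquiv m) (fromBlocks (B i) 0 0 (C i))) :
    Qgen (m + 1) A =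
      ∑ i, Qgen m (fun j => B (i.succAbove j)) * Qgen 1 (fun _ => C i) := by
  simp only [one_eq_sum]
  simp only [eq_sum_pairTerm, hA, reindex_fromBlocks_sub_transpose]
  exact sum_pairTerm_reindex_fromBlocks

end Qgen

/-- Lemma 5 of the paper: if each `Aᵢ ∈ M(2n,ℂ)` is block diagonal with an upper-left
`(2n-2)×(2n-2)` block `Bᵢ` and a lower-right `2×2` block `Cᵢ`, then
`Q(A₁,...,Aₙ) = ∑ᵢ Q(B₁,...,B̂ᵢ,...,Bₙ) ⬝ Q(Cᵢ)`. -/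
theorem stmt3 (n : ℕ) (hn : 1 ≤ n)
    (B : Fin n → Matrix (Fin (2*(n-1))) (Fin (2*(n-1))) ℂ)
    (C : Fin n → Matrix (Fin 2) (Fin 2) ℂ)
    (A : Fin n → Matrix (Fin (2*n)) (Fin (2*n)) ℂ)
    (hA : ∀ i, A i = (Matrix.reindex
        (finSumFinEquiv.trans (finCongr (by omega : 2*(n-1) + 2 = 2*n)))
        (finSumFinEquiv.trans (finCongr (by omega : 2*(n-1) + 2 = 2*n))))
        (Matrix.fromBlocks (B i) 0 0 (C i))) :
    Qgen n A =
      ∑ i : Fin n,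
        Qgen (n-1) (fun j : Fin (n-1) =>
          if h : (j:ℕ) < (i:ℕ) then B ⟨j, by omega⟩
          else B ⟨(j:ℕ)+1, by have := j.isLt; omega⟩) * Qgen 1 (fun _ => C i) := by
  obtain ⟨m, rfl⟩ : ∃ m, n = m + 1 := ⟨n - 1, by omega⟩
  refine (Qgen.succ_eq_sum_of_fromBlocks B C A hA).trans (Finset.sum_congr rfl fun i _ => ?_)
  congr 2
  funext j
  split_ifs with h
  · rw [Fin.succAbove_of_castSucc_lt _ _ h]; rfl
  · rw [Fin.succAbove_of_le_castSucc _ _ (not_lt.mp h)]; rfl
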